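/- Let A be a real m × n matrix, b ∈ ℝᵐ, λ > 0, a > 0, and 0 < μ < 1/‖A‖₂², where ‖A‖₂ is the operator (spectral) norm of A. Let B_μ(z) = z + μ Aᵀ(b − Az) and let ∇₊ denote the componentwise positive part. If x* ≥ 0 is a global minimizer over {x ∈ ℝⁿ : x ≥ 0} of x ↦ ‖Ax − b‖₂² + λ P_a(x), then x* is a global minimizer over all of ℝⁿ of x ↦ ‖x − ∇₊(B_μ(x*))‖₂² + λμ P_a(x). -/

import Mathlib

/-!
The surrogate `C2 · z` majorizes `μ C1` as soon as `μ ‖A‖² ≤ 1`, touches it at `z`, and differs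
from `y ↦ ‖y - B_μ z‖² + λμ P_a y` by a constant, so `x*` also minimizes the latter over the
nonnegative orthant. Minimality over all of `ℝⁿ` for the positive part of `B_μ x*` then follows
coordinatewise, since `ρ_a` vanishes at `0` and increases with `|t|`.
-/

open Matrix Filter Topology

noncomputable def rho (a t : ℝ) : ℝ := a * |t| / (a * |t| + 1)

noncomputable def Pa {n : ℕ} (a : ℝ) (x : Fin n → ℝ) : ℝ := ∑ i, rho a (x i)

open scoped Classical in
noncomputable def l0 {n : ℕ} (x : Fin n → ℝ) : ℕ :=
  (Finset.univ.filter fun i => x i ≠ 0).card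

def SOL {m n : ℕ} (A : Matrix (Fin m) (Fin n) ℝ) (b : Fin m → ℝ) : Set (Fin n → ℝ) :=
  {x | A.mulVec x = b ∧ 0 ≤ x}

noncomputable def sqN {n : ℕ} (v : Fin n → ℝ) : ℝ := ∑ i, (v i) ^ 2

def projPos {n : ℕ} (v : Fin n → ℝ) : Fin n → ℝ := fun i => max 0 (v i)

noncomputable def C1 {m n : ℕ} (A : Matrix (Fin m) (Fin n) ℝ) (b : Fin m → ℝ)
    (lam a : ℝ) (x : Fin n → ℝ) : ℝ :=
  sqN (A.mulVec x - b) + lam * Pa a x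

noncomputable def C2 {m n : ℕ} (A : Matrix (Fin m) (Fin n) ℝ) (b : Fin m → ℝ)
    (lam a mu : ℝ) (x z : Fin n → ℝ) : ℝ :=
  mu * (C1 A b lam a x - sqN (A.mulVec x - A.mulVec z)) + sqN (x - z)

noncomputable def Bmu {m n : ℕ} (A : Matrix (Fin m) (Fin n) ℝ) (b : Fin m → ℝ)
    (mu : ℝ) (z : Fin n → ℝ) : Fin n → ℝ :=
  z + mu • (Aᵀ.mulVec (b - A.mulVec z))

lemma rho_nonneg {a : ℝ} (ha : 0 ≤ a) (t : ℝ) : 0 ≤ rho a t := by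
  unfold rho
  have : 0 ≤ a * |t| := by positivity
  positivity

lemma rho_le_rho_of_abs_le {a s t : ℝ} (ha : 0 ≤ a) (h : |s| ≤ |t|) : rho a s ≤ rho a t := by
  have hs : 0 ≤ a * |s| := by positivity
  have hst : a * |s| ≤ a * |t| := mul_le_mul_of_nonneg_left h ha
  unfold rho
  rw [div_le_div_iff₀ (by linarith) (by linarith)]
  nlinarith

lemma sqN_sub {n : ℕ} (u v : Fin n → ℝ) : sqN (u - v) = sqN u - 2 * (u ⬝ᵥ v) + sqN v := by
  simp only [sqN, dotProduct, Pi.sub_apply, Finset.mul_sum, ← Finset.sum_sub_distrib,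
    ← Finset.sum_add_distrib]
  exact Finset.sum_congr rfl fun i _ => by ring

lemma sqN_smul {n : ℕ} (c : ℝ) (v : Fin n → ℝ) : sqN (c • v) = c ^ 2 * sqN v := by
  simp only [sqN, Pi.smul_apply, smul_eq_mul, Finset.mul_sum]
  exact Finset.sum_congr rfl fun i _ => by ring

lemma sqN_eq_norm_sq {n : ℕ} (v : Fin n → ℝ) : sqN v = ‖WithLp.toLp 2 v‖ ^ 2 := by
  rw [EuclideanSpace.norm_eq, Real.sq_sqrt (by positivity)]
  simp [sqN, sq_abs]

lemma sqN_neg {n : ℕ} (v : Fin n → ℝ) : sqN (-v) = sqN v := by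
  simp [sqN]

section L2OperatorNorm

open scoped Matrix.Norms.L2Operator

lemma sqN_mulVec_le {m n : ℕ} (A : Matrix (Fin m) (Fin n) ℝ) (v : Fin n → ℝ) :
    sqN (A *ᵥ v) ≤ ‖A‖ ^ 2 * sqN v := by
  rw [sqN_eq_norm_sq, sqN_eq_norm_sq, ← mul_pow]
  exact pow_le_pow_left₀ (norm_nonneg _) (A.l2_opNorm_mulVec _) 2

lemma mul_sqN_mulVec_le {m n : ℕ} (A : Matrix (Fin m) (Fin n) ℝ) {mu : ℝ}
    (hmu : 0 ≤ mu) (hmu2 : mu ≤ 1 / ‖A‖ ^ 2) (v : Fin n → ℝ) :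
    mu * sqN (A *ᵥ v) ≤ sqN v := by
  have hmuA : mu * ‖A‖ ^ 2 ≤ 1 := by
    rcases (sq_nonneg ‖A‖).eq_or_lt with h | h
    · rw [← h, mul_zero]; exact zero_le_one
    · exact (le_div_iff₀ h).mp hmu2
  calc mu * sqN (A *ᵥ v) ≤ mu * (‖A‖ ^ 2 * sqN v) :=
        mul_le_mul_of_nonneg_left (sqN_mulVec_le A v) hmu
    _ = (mu * ‖A‖ ^ 2) * sqN v := by ring
    _ ≤ sqN v := mul_le_of_le_one_left (by rw [sqN]; positivity) hmuA

lemma mul_C1_le_C2 {m n : ℕ} (A : Matrix (Fin m) (Fin n) ℝ) (b : Fin m → ℝ)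
    (lam a : ℝ) {mu : ℝ} (hmu : 0 ≤ mu) (hmu2 : mu ≤ 1 / ‖A‖ ^ 2) (x z : Fin n → ℝ) :
    mu * C1 A b lam a x ≤ C2 A b lam a mu x z := by
  have := mul_sqN_mulVec_le A hmu hmu2 (x - z)
  rw [mulVec_sub] at this
  unfold C2
  linarith

end L2OperatorNorm

lemma C2_self {m n : ℕ} (A : Matrix (Fin m) (Fin n) ℝ) (b : Fin m → ℝ) (lam a mu : ℝ)
    (z : Fin n → ℝ) : C2 A b lam a mu z z = mu * C1 A b lam a z := by
  simp [C2, sqN]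

lemma sqN_sub_Bmu_add_eq_C2 {m n : ℕ} (A : Matrix (Fin m) (Fin n) ℝ) (b : Fin m → ℝ)
    (lam a mu : ℝ) (y z : Fin n → ℝ) :
    sqN (y - Bmu A b mu z) + lam * mu * Pa a y =
      C2 A b lam a mu y z + (mu ^ 2 * sqN (Aᵀ *ᵥ (b - A *ᵥ z)) - mu * sqN (A *ᵥ z - b)) := by
  have hstep : y - Bmu A b mu z = (y - z) - mu • (Aᵀ *ᵥ (b - A *ᵥ z)) := by
    rw [Bmu]; abel
  have hres : A *ᵥ y - b = A *ᵥ (y - z) - (b - A *ᵥ z) := by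
    rw [mulVec_sub]; abel
  have hadj : (y - z) ⬝ᵥ (Aᵀ *ᵥ (b - A *ᵥ z)) = A *ᵥ (y - z) ⬝ᵥ (b - A *ᵥ z) := by
    rw [dotProduct_mulVec, vecMul_transpose]
  have hAyz : A *ᵥ y - A *ᵥ z = A *ᵥ (y - z) := (mulVec_sub A y z).symm
  have hzb : A *ᵥ z - b = -(b - A *ᵥ z) := (neg_sub _ _).symm
  rw [C2, C1, hstep, hres, hAyz, hzb, sqN_neg, sqN_sub (y - z), sqN_sub (A *ᵥ (y - z)),
    sqN_smul, dotProduct_smul, hadj, smul_eq_mul]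
  ring

open scoped Matrix.Norms.L2Operator in
lemma isMinOn_sqN_sub_Bmu_add {m n : ℕ} (A : Matrix (Fin m) (Fin n) ℝ) (b : Fin m → ℝ)
    (lam a : ℝ) {mu : ℝ} (hmu : 0 ≤ mu) (hmu2 : mu ≤ 1 / ‖A‖ ^ 2) {xstar : Fin n → ℝ}
    (hmin : IsMinOn (C1 A b lam a) (Set.Ici 0) xstar) :
    IsMinOn (fun y => sqN (y - Bmu A b mu xstar) + lam * mu * Pa a y) (Set.Ici 0) xstar := by
  refine isMinOn_iff.mpr fun y hy => ?_
  rw [sqN_sub_Bmu_add_eq_C2, sqN_sub_Bmu_add_eq_C2, C2_self, add_le_add_iff_right]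
  calc mu * C1 A b lam a xstar ≤ mu * C1 A b lam a y :=
        mul_le_mul_of_nonneg_left (isMinOn_iff.mp hmin y hy) hmu
    _ ≤ C2 A b lam a mu y xstar := mul_C1_le_C2 A b lam a hmu hmu2 y xstar

lemma sq_sub_max_zero_add_sq_min_zero_le {s β : ℝ} (hs : 0 ≤ s) :
    (s - max 0 β) ^ 2 + min 0 β ^ 2 ≤ (s - β) ^ 2 := by
  rcases le_total 0 β with hβ | hβ
  · simp [max_eq_right hβ, min_eq_left hβ]
  · rw [max_eq_left hβ, min_eq_right hβ]
    nlinarith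

lemma sq_sub_add_mul_rho_le {a c : ℝ} (ha : 0 ≤ a) (hc : 0 ≤ c) (β t : ℝ) :
    ((if 0 ≤ β then max 0 t else 0) - β) ^ 2 + c * rho a (if 0 ≤ β then max 0 t else 0) ≤
      (t - max 0 β) ^ 2 + c * rho a t + min 0 β ^ 2 := by
  split_ifs with hβ
  · rw [max_eq_right hβ, min_eq_left hβ]
    have hsq : (max 0 t - β) ^ 2 ≤ (t - β) ^ 2 := by
      rcases le_total 0 t with ht | ht
      · rw [max_eq_right ht]
      · rw [max_eq_left ht]; nlinarith
    have hrho : rho a (max 0 t) ≤ rho a t := rho_le_rho_of_abs_le ha <| by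
      rw [abs_of_nonneg (le_max_left 0 t)]
      exact max_le (abs_nonneg t) (le_abs_self t)
    nlinarith [mul_le_mul_of_nonneg_left hrho hc]
  · rw [max_eq_left (not_le.mp hβ).le, min_eq_right (not_le.mp hβ).le]
    have : rho a 0 = 0 := by simp [rho]
    nlinarith [mul_nonneg hc (rho_nonneg ha t)]

lemma sqN_sub_add_mul_Pa {n : ℕ} (a c : ℝ) (x β : Fin n → ℝ) :
    sqN (x - β) + c * Pa a x = ∑ i, ((x i - β i) ^ 2 + c * rho a (x i)) := by
  simp only [sqN, Pa, Pi.sub_apply, Finset.mul_sum, Finset.sum_add_distrib]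

lemma isMinOn_univ_sqN_sub_projPos_add {n : ℕ} {a c : ℝ} (ha : 0 ≤ a) (hc : 0 ≤ c)
    {β xstar : Fin n → ℝ} (hxs : 0 ≤ xstar)
    (hmin : IsMinOn (fun y => sqN (y - β) + c * Pa a y) (Set.Ici 0) xstar) :
    IsMinOn (fun y => sqN (y - projPos β) + c * Pa a y) Set.univ xstar := by
  refine isMinOn_univ_iff.mpr fun x => ?_
  set D := ∑ i, min 0 (β i) ^ 2
  -- On points vanishing where `β < 0` the two objectives differ by exactly `D`, and clipping
  -- `x` to such a point of the orthant does not increase the objective.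
  set x' : Fin n → ℝ := fun i => if 0 ≤ β i then max 0 (x i) else 0
  have hx' : 0 ≤ x' := fun i => by
    dsimp only [x']
    split_ifs
    exacts [le_max_left _ _, le_rfl]
  have hstar : sqN (xstar - projPos β) + D ≤ sqN (xstar - β) := by
    simp only [sqN, D, ← Finset.sum_add_distrib]
    exact Finset.sum_le_sum fun i _ => sq_sub_max_zero_add_sq_min_zero_le (hxs i)
  have hclip : sqN (x' - β) + c * Pa a x' ≤ sqN (x - projPos β) + c * Pa a x + D := by
    simp only [sqN_sub_add_mul_Pa, D, ← Finset.sum_add_distrib]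
    exact Finset.sum_le_sum fun i _ => sq_sub_add_mul_rho_le ha hc (β i) (x i)
  linarith [isMinOn_iff.mp hmin x' hx']

open scoped Matrix.Norms.L2Operator in
theorem stmt16 {m n : ℕ} (A : Matrix (Fin m) (Fin n) ℝ) (b : Fin m → ℝ)
    (lam a mu : ℝ) (hl : 0 < lam) (ha : 0 < a)
    (hmu : 0 < mu) (hmu2 : mu < 1 / ‖A‖ ^ 2)
    (xstar : Fin n → ℝ) (hxs : 0 ≤ xstar)
    (hmin : ∀ x : Fin n → ℝ, 0 ≤ x → C1 A b lam a xstar ≤ C1 A b lam a x) :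
    ∀ x : Fin n → ℝ,
      sqN (xstar - projPos (Bmu A b mu xstar)) + lam * mu * Pa a xstar ≤
        sqN (x - projPos (Bmu A b mu xstar)) + lam * mu * Pa a x :=
  isMinOn_univ_iff.mp <| isMinOn_univ_sqN_sub_projPos_add ha.le (mul_pos hl hmu).le hxs <|
    isMinOn_sqN_sub_Bmu_add A b lam a hmu.le hmu2.le hmin
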